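/- Let n, M ∈ ℕ, let d ∈ ℝⁿ satisfy dᵢ > 0 for all i, let D = diag(d₁, …, dₙ) ∈ ℝ^{n×n}, let S ∈ ℝ^{n×n} satisfy S_{ij} ≤ 0 for all i ≠ j, and let τ ≥ 0. Set P := exp(−τ D^{−1} S). Let a_m ∈ ℝⁿ for m = 0, …, M−1 be arbitrary vectors, and define a sequence U_0, U_1, …, U_M ∈ ℝⁿ by choosing U_0 with all entries nonnegative and setting, for 0 ≤ m ≤ M−1, U_{m+1} = P v_m, where v_m ∈ ℝⁿ is the vector with entries (v_m)_j = e^{(a_m)_j} (U_m)_j. Then for every 0 ≤ m ≤ M and every 1 ≤ j ≤ n, (U_m)_j ≥ 0. -/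

import Mathlib

/-!
Dividing the stiffness matrix by the positive lumped masses keeps its off-diagonal entries
nonpositive, so `-τ D⁻¹ S` is a Metzler matrix. Shifting a Metzler matrix by a large enough
multiple `c` of the identity makes it entrywise nonnegative, and since the shift commutes,
`exp A = e^{-c} exp (A + c I)`; the exponential series of a nonnegative matrix has nonnegative
terms. Hence `P` is entrywise nonnegative, and so is each step `U ↦ P (e^{a_j} U_j)_j`.
-/

open NormedSpace

namespace Matrix

variable {ι : Type*} [Fintype ι] [DecidableEq ι]

theorem exp_apply_nonneg {A : Matrix ι ι ℝ} (hA : ∀ i j, 0 ≤ A i j) (i j : ι) :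
    0 ≤ exp A i j := by
  -- stated in `ι → ι → ℝ`, whose pointwise order `Matrix` does not inherit
  have hseries : (0 : ι → ι → ℝ) ≤ ∑' k : ℕ, fun i j => ((k.factorial : ℚ)⁻¹ • A ^ k) i j :=
    tsum_nonneg fun k i j => by
      rw [smul_apply]
      exact smul_nonneg (by positivity) (pow_apply_nonneg hA k i j)
  rw [exp_eq_tsum_rat]
  exact hseries i j

theorem exp_apply_nonneg_of_offDiag_nonneg {A : Matrix ι ι ℝ}
    (hA : ∀ i j, i ≠ j → 0 ≤ A i j) (i j : ι) : 0 ≤ exp A i j := by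
  obtain ⟨c, hc⟩ := (Set.finite_range fun i => -A i i).bddAbove
  have hshift : ∀ i j, 0 ≤ (A + scalar ι c) i j := by
    intro i j
    rcases eq_or_ne i j with rfl | hij
    · simpa [neg_le_iff_add_nonneg'] using hc ⟨i, rfl⟩
    · simpa [hij] using hA i j hij
  have hsplit : exp A = exp (A + scalar ι c) * diagonal fun _ => Real.exp (-c) := by
    have hexp : exp (scalar ι (-c)) = diagonal fun _ => Real.exp (-c) := by
      rw [scalar_apply, exp_diagonal, Pi.exp_def, Real.exp_eq_exp_ℝ]
    rw [← hexp, ← exp_add_of_commute _ _ ((scalar_commute _ (Commute.all _) _).symm), map_neg,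
      add_neg_cancel_right]
  rw [hsplit, mul_diagonal]
  exact mul_nonneg (exp_apply_nonneg hshift i j) (Real.exp_pos _).le

theorem inv_diagonal_of_ne_zero {K : Type*} [Field K] {d : ι → K} (hd : ∀ i, d i ≠ 0) :
    (diagonal d)⁻¹ = diagonal d⁻¹ :=
  inv_eq_left_inv <| by
    rw [diagonal_mul_diagonal, ← diagonal_one]
    exact congrArg diagonal (funext fun i => inv_mul_cancel₀ (hd i))

theorem neg_smul_inv_diagonal_mul_apply_nonneg {d : ι → ℝ} (hd : ∀ i, 0 < d i)
    {S : Matrix ι ι ℝ} (hS : ∀ i j, i ≠ j → S i j ≤ 0) {τ : ℝ} (hτ : 0 ≤ τ) {i j : ι}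
    (hij : i ≠ j) : 0 ≤ (-(τ • ((diagonal d)⁻¹ * S))) i j := by
  rw [inv_diagonal_of_ne_zero fun i => (hd i).ne', neg_apply, smul_apply, diagonal_mul,
    Pi.inv_apply, smul_eq_mul, neg_nonneg]
  exact mul_nonpos_of_nonneg_of_nonpos hτ
    (mul_nonpos_of_nonneg_of_nonpos (inv_nonneg.2 (hd i).le) (hS i j hij))

end Matrix

/-- **Theorem 4.1 (pathwise nonnegativity of the Lie–Trotter scheme).** Let
`D = diag(d)` with `dᵢ > 0`, let `S` have nonpositive off-diagonal entries, `τ ≥ 0`,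
and set `P = exp(-τ D⁻¹ S)`. If a sequence `U 0, …, U M` in `ℝⁿ` starts from an
entrywise nonnegative `U 0` and satisfies `U (m+1) = P (e^{(a m)ⱼ} (U m)ⱼ)ⱼ` for
`0 ≤ m ≤ M - 1` and arbitrary vectors `a m ∈ ℝⁿ`, then every `U m`, `0 ≤ m ≤ M`, is
entrywise nonnegative. -/
theorem lie_trotter_scheme_nonneg
    (n M : ℕ) (d : Fin n → ℝ) (hd : ∀ i, 0 < d i)
    (S : Matrix (Fin n) (Fin n) ℝ) (hS : ∀ i j, i ≠ j → S i j ≤ 0)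
    (τ : ℝ) (hτ : 0 ≤ τ)
    (P : Matrix (Fin n) (Fin n) ℝ)
    (hP : P = NormedSpace.exp (-(τ • ((Matrix.diagonal d)⁻¹ * S))))
    (a : ℕ → Fin n → ℝ) (U : ℕ → Fin n → ℝ)
    (hU0 : ∀ j, 0 ≤ U 0 j)
    (hUstep : ∀ m < M, U (m + 1) = P.mulVec fun j => Real.exp (a m j) * U m j) :
    ∀ m ≤ M, ∀ j, 0 ≤ U m j := by
  have hP_nonneg : ∀ i j, 0 ≤ P i j := hP ▸
    Matrix.exp_apply_nonneg_of_offDiag_nonneg fun _ _ hij =>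
      Matrix.neg_smul_inv_diagonal_mul_apply_nonneg hd hS hτ hij
  intro m hm
  induction m with
  | zero => exact hU0
  | succ m ih =>
    intro j
    rw [hUstep m hm]
    exact dotProduct_nonneg_of_nonneg (hP_nonneg j)
      fun l => mul_nonneg (Real.exp_pos _).le (ih (Nat.le_of_succ_le hm) l)
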